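/- arXiv:1705.04227 — 2 statements merged into one kernel-verified Lean document; each statement's English description precedes it below -/
import Mathlib

section
/- For any bounded domain Ω ⊂ ℝⁿ with positive finite measure, any 1 ≤ p < ∞, s ∈ (0,1), and any f ∈ L^p(Ω), the inequality inf_{c∈ℝ} ‖f − c‖_{L^p(Ω)}^p ≤ (diam(Ω)^{n+sp}/|Ω|) ∫_Ω ∫_Ω |f(y)−f(x)|^p / |y−x|^{n+sp} dy dx holds. -/
/-!
Taking the constant `c = f x` and averaging over `x ∈ Ω` bounds the infimum by
`|Ω|⁻¹ ∫_Ω ∫_Ω |f y - f x|^p`; since `|y - x| ≤ diam Ω` on `Ω × Ω`, inserting the weight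
`(diam Ω / |y - x|)^(n + s p) ≥ 1` into the integrand gives the Gagliardo seminorm.
-/

open MeasureTheory Metric Set ENNReal

theorem iInf_le_lintegral_comp_div {α ι : Type*} [MeasurableSpace α] {μ : Measure α}
    (hμ₀ : μ univ ≠ 0) (hμ : μ univ ≠ ∞) (G : ι → ℝ≥0∞) (g : α → ι) :
    ⨅ c, G c ≤ (∫⁻ x, G (g x) ∂μ) / μ univ := by
  rw [ENNReal.le_div_iff_mul_le (.inl hμ₀) (.inl hμ), ← lintegral_const]
  exact lintegral_mono fun x => iInf_le G (g x)

section Metric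

variable {X : Type*} [MetricSpace X] {Ω : Set X} {p K : ℝ}

theorem ofReal_abs_sub_rpow_le_diam_mul (hΩ : Bornology.IsBounded Ω) (hp : p ≠ 0) (hK : 0 ≤ K)
    (f : X → ℝ) {x y : X} (hx : x ∈ Ω) (hy : y ∈ Ω) :
    ENNReal.ofReal (|f y - f x| ^ p) ≤
      ENNReal.ofReal (diam Ω ^ K) * ENNReal.ofReal (|f y - f x| ^ p / dist y x ^ K) := by
  rcases eq_or_ne y x with rfl | hne
  · simp [Real.zero_rpow hp]
  have hdist : 0 < dist y x ^ K := Real.rpow_pos_of_pos (dist_pos.mpr hne) K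
  rw [← ENNReal.ofReal_mul (Real.rpow_nonneg diam_nonneg K)]
  refine ENNReal.ofReal_le_ofReal ?_
  calc |f y - f x| ^ p = dist y x ^ K * (|f y - f x| ^ p / dist y x ^ K) := by field_simp
    _ ≤ diam Ω ^ K * (|f y - f x| ^ p / dist y x ^ K) := by
      gcongr
      exact dist_le_diam_of_mem hΩ hy hx

theorem lintegral_lintegral_abs_sub_rpow_le [MeasurableSpace X] (μ : Measure X)
    (hΩm : MeasurableSet Ω) (hΩ : Bornology.IsBounded Ω) (hp : p ≠ 0) (hK : 0 ≤ K) (f : X → ℝ) :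
    ∫⁻ x in Ω, ∫⁻ y in Ω, ENNReal.ofReal (|f y - f x| ^ p) ∂μ ∂μ ≤
      ENNReal.ofReal (diam Ω ^ K) *
        ∫⁻ x in Ω, ∫⁻ y in Ω, ENNReal.ofReal (|f y - f x| ^ p / dist y x ^ K) ∂μ ∂μ := by
  rw [← lintegral_const_mul' _ _ ofReal_ne_top]
  refine setLIntegral_mono' hΩm fun x hx => ?_
  rw [← lintegral_const_mul' _ _ ofReal_ne_top]
  exact setLIntegral_mono' hΩm fun y hy => ofReal_abs_sub_rpow_le_diam_mul hΩ hp hK f hx hy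

end Metric

theorem stmt0_general {n : ℕ} (Ω : Set (EuclideanSpace ℝ (Fin n)))
    (hΩo : IsOpen Ω) (hΩb : Bornology.IsBounded Ω)
    (hvol : 0 < volume Ω) (p s : ℝ) (hp : 1 ≤ p) (hs : s ∈ Set.Ioo (0:ℝ) 1)
    (f : EuclideanSpace ℝ (Fin n) → ℝ) :
    (⨅ c : ℝ, ∫⁻ y in Ω, ENNReal.ofReal (|f y - c| ^ p)) ≤
      ENNReal.ofReal (Metric.diam Ω ^ ((n : ℝ) + s * p) / (volume Ω).toReal) *
        ∫⁻ x in Ω, ∫⁻ y in Ω,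
          ENNReal.ofReal (|f y - f x| ^ p / dist y x ^ ((n : ℝ) + s * p)) := by
  have hfin : volume Ω ≠ ∞ := hΩb.measure_lt_top.ne
  have hK : 0 ≤ (n : ℝ) + s * p := by have := hs.1; positivity
  have hvol' : (volume.restrict Ω) univ = volume Ω := Measure.restrict_apply_univ Ω
  calc (⨅ c : ℝ, ∫⁻ y in Ω, ENNReal.ofReal (|f y - c| ^ p))
      ≤ (∫⁻ x in Ω, ∫⁻ y in Ω, ENNReal.ofReal (|f y - f x| ^ p)) / volume Ω := by
        rw [← hvol']
        exact iInf_le_lintegral_comp_div (hvol' ▸ hvol.ne') (hvol' ▸ hfin) _ f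
    _ ≤ ENNReal.ofReal (diam Ω ^ ((n : ℝ) + s * p)) * (∫⁻ x in Ω, ∫⁻ y in Ω,
          ENNReal.ofReal (|f y - f x| ^ p / dist y x ^ ((n : ℝ) + s * p))) / volume Ω := by
        gcongr
        exact lintegral_lintegral_abs_sub_rpow_le volume hΩo.measurableSet hΩb (by linarith) hK f
    _ = _ := by
        rw [ENNReal.ofReal_div_of_pos (ENNReal.toReal_pos hvol.ne' hfin), ofReal_toReal hfin,
          ENNReal.mul_div_right_comm]

/-- Elementary fractional Poincaré inequality on an arbitrary bounded domain. -/
theorem stmt0 {n : ℕ} (hn : 1 ≤ n) (Ω : Set (EuclideanSpace ℝ (Fin n)))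
    (hΩo : IsOpen Ω) (hΩc : IsConnected Ω) (hΩb : Bornology.IsBounded Ω)
    (hvol : 0 < volume Ω) (p s : ℝ) (hp : 1 ≤ p) (hs : s ∈ Set.Ioo (0:ℝ) 1)
    (f : EuclideanSpace ℝ (Fin n) → ℝ)
    (hf : MemLp f (ENNReal.ofReal p) (volume.restrict Ω)) :
    (⨅ c : ℝ, ∫⁻ y in Ω, ENNReal.ofReal (|f y - c| ^ p)) ≤
      ENNReal.ofReal (Metric.diam Ω ^ ((n : ℝ) + s * p) / (volume Ω).toReal) *
        ∫⁻ x in Ω, ∫⁻ y in Ω,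
          ENNReal.ofReal (|f y - f x| ^ p / dist y x ^ ((n : ℝ) + s * p)) :=
  stmt0_general Ω hΩo hΩb hvol p s hp hs f
end

section
/- Let 0 < α ≤ 1, s ∈ (0,1), 1 < p < ∞, b ≥ −(1−s)p, ν > 0, and let Ω = {x ∈ ℝⁿ : 0 < x_n < 1, |x'| < x_n^{1/α}} with f(x) = x_n^{−ν}. Then there is C > 0 such that for every x ∈ Ω, ∫_{|x−z| < d(x)/2} |f(z) − f(x)|^p / |z−x|^{n+sp} · min{d(x),d(z)}^b dz ≤ C x_n^{−(ν+1)p + (b + (1−s)p)/α}. -/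
open MeasureTheory Metric Set ENNReal

/-- Distance to the boundary of `Ω` (distance to the complement), for subsets of
`ℝⁿ = ℝ^{n-1} × ℝ` written as `x = (x', xₙ)`. -/
noncomputable def dC {m : ℕ} (Ω : Set (EuclideanSpace ℝ (Fin m) × ℝ))
    (x : EuclideanSpace ℝ (Fin m) × ℝ) : ℝ := Metric.infDist x Ωᶜ

/-- The Hölder-`α` cusp `Ω = {0 < xₙ < 1, |x'| < xₙ^{1/α}}` in `ℝⁿ`, with
`x = (x', xₙ) ∈ ℝ^{m} × ℝ`. -/
def cusp (m : ℕ) (α : ℝ) : Set (EuclideanSpace ℝ (Fin m) × ℝ) :=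
  {x | 0 < x.2 ∧ x.2 < 1 ∧ ‖x.1‖ < x.2 ^ (1 / α)}


lemma lintegral_ball_rpow_neg {E : Type*} [NormedAddCommGroup E] [NormedSpace ℝ E]
    [MeasurableSpace E] [BorelSpace E] [FiniteDimensional ℝ E] [Nontrivial E]
    (μ : Measure E) [μ.IsAddHaarMeasure] {β : ℝ} (hβ : β < Module.finrank ℝ E) :
    ∃ C : ℝ, 0 < C ∧ ∀ (x : E) (r : ℝ), 0 < r →
      ∫⁻ z in ball x r, ENNReal.ofReal (dist z x ^ (-β)) ∂μ ≤
        ENNReal.ofReal (C * r ^ ((Module.finrank ℝ E : ℝ) - β)) := by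
  classical
  set d : ℕ := Module.finrank ℝ E with hd
  set γ : ℝ := (d : ℝ) - β with hγ
  have hγ0 : 0 < γ := by rw [hγ]; linarith
  set q : ℝ := (1/2 : ℝ) ^ γ with hq
  have hq0 : 0 < q := Real.rpow_pos_of_pos (by norm_num) _
  have hq1 : q < 1 := Real.rpow_lt_one (by norm_num) (by norm_num) hγ0
  set C₀ : ℝ≥0∞ := μ (ball 0 1) * ENNReal.ofReal (2 ^ |β|) * (1 - ENNReal.ofReal q)⁻¹
    with hC₀
  have hsub : (0:ℝ≥0∞) < 1 - ENNReal.ofReal q := tsub_pos_of_lt (ENNReal.ofReal_lt_one.2 hq1)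
  have hC₀top : C₀ ≠ ∞ := by
    refine ENNReal.mul_ne_top (ENNReal.mul_ne_top measure_ball_lt_top.ne ofReal_ne_top) ?_
    rw [ENNReal.inv_ne_top]
    exact hsub.ne'
  refine ⟨C₀.toReal + 1, by positivity, fun x r hr => ?_⟩
  set u : ℕ → ℝ := fun k => (1/2:ℝ)^k * r with hu
  have hu0 : ∀ k, 0 < u k := fun k => by rw [hu]; positivity
  have huS : ∀ k, u (k+1) = (1/2) * u k := fun k => by rw [hu]; ring
  set S : ℕ → Set E := fun k => closedBall x (u k) \ ball x (u (k+1)) with hS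
  -- coverage
  have hcov : ball x r \ {x} ⊆ ⋃ k, S k := by
    rintro z ⟨hz, hzx⟩
    have hdz : 0 < dist z x := dist_pos.2 (by simpa using hzx)
    have hzr : dist z x < r := mem_ball.1 hz
    have hex : ∃ k, u k < dist z x := by
      obtain ⟨k, hk⟩ := exists_pow_lt_of_lt_one (div_pos hdz hr) (by norm_num : (1/2:ℝ) < 1)
      exact ⟨k, (lt_div_iff₀ hr).1 hk⟩
    set k0 := Nat.find hex with hk0def
    have hk0 : u k0 < dist z x := Nat.find_spec hex
    have hk0pos : k0 ≠ 0 := by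
      intro h
      rw [h] at hk0
      simp only [hu, pow_zero, one_mul] at hk0
      linarith
    obtain ⟨k, hk⟩ := Nat.exists_eq_succ_of_ne_zero hk0pos
    rw [hk] at hk0
    have hk1 : ¬ (u k < dist z x) := Nat.find_min hex (by omega)
    refine mem_iUnion.2 ⟨k, mem_closedBall.2 (le_of_not_gt hk1), fun h => ?_⟩
    exact absurd (mem_ball.1 h) (not_lt.2 hk0.le)
  have h2β : (1:ℝ) ≤ 2 ^ |β| := by
    calc (1:ℝ) = 2 ^ (0:ℝ) := (Real.rpow_zero 2).symm
      _ ≤ 2 ^ |β| := Real.rpow_le_rpow_of_exponent_le one_le_two (abs_nonneg β)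
  calc ∫⁻ z in ball x r, ENNReal.ofReal (dist z x ^ (-β)) ∂μ
      = ∫⁻ z in ball x r \ {x}, ENNReal.ofReal (dist z x ^ (-β)) ∂μ := by
        refine (setLIntegral_congr ?_).symm
        exact diff_ae_eq_self.2 (measure_mono_null inter_subset_right (measure_singleton x))
    _ ≤ ∫⁻ z in ⋃ k, S k, ENNReal.ofReal (dist z x ^ (-β)) ∂μ := lintegral_mono_set hcov
    _ ≤ ∑' k, ∫⁻ z in S k, ENNReal.ofReal (dist z x ^ (-β)) ∂μ := lintegral_iUnion_le _ _
    _ ≤ ∑' k, (μ (ball 0 1) * ENNReal.ofReal (2 ^ |β|) * ENNReal.ofReal (r ^ γ))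
          * ENNReal.ofReal q ^ k := by
        refine ENNReal.tsum_le_tsum fun k => ?_
        have hSm : MeasurableSet (S k) := measurableSet_closedBall.diff measurableSet_ball
        have hpt : ∀ z ∈ S k, ENNReal.ofReal (dist z x ^ (-β)) ≤
            ENNReal.ofReal (2 ^ |β| * u k ^ (-β)) := by
          rintro z ⟨hz1, hz2⟩
          apply ENNReal.ofReal_le_ofReal
          have hz1' : dist z x ≤ u k := mem_closedBall.1 hz1
          have hz2' : u (k+1) ≤ dist z x := le_of_not_gt fun h => hz2 (mem_ball.2 h)
          rcases le_or_gt 0 β with hβ0 | hβ0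
          · have h1 : dist z x ^ (-β) ≤ u (k+1) ^ (-β) :=
              Real.rpow_le_rpow_of_nonpos (hu0 (k+1)) hz2' (neg_nonpos.2 hβ0)
            have h2 : u (k+1) ^ (-β) = 2 ^ β * u k ^ (-β) := by
              rw [huS k, show (1/2:ℝ) * u k = (2:ℝ)⁻¹ * u k by ring,
                Real.mul_rpow (by norm_num) (hu0 k).le,
                Real.inv_rpow (by norm_num), ← Real.rpow_neg (by norm_num), neg_neg]
            have h3 : (2:ℝ) ^ β ≤ 2 ^ |β| :=
              Real.rpow_le_rpow_of_exponent_le one_le_two (le_abs_self β)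
            calc dist z x ^ (-β) ≤ 2 ^ β * u k ^ (-β) := h2 ▸ h1
              _ ≤ 2 ^ |β| * u k ^ (-β) :=
                mul_le_mul_of_nonneg_right h3 (Real.rpow_nonneg (hu0 k).le _)
          · have h1 : dist z x ^ (-β) ≤ u k ^ (-β) :=
              Real.rpow_le_rpow dist_nonneg hz1' (by linarith)
            calc dist z x ^ (-β) ≤ u k ^ (-β) := h1
              _ ≤ 2 ^ |β| * u k ^ (-β) :=
                le_mul_of_one_le_left (Real.rpow_nonneg (hu0 k).le _) h2β
        have hmeas : μ (S k) ≤ ENNReal.ofReal (u k ^ d) * μ (ball 0 1) := by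
          calc μ (S k) ≤ μ (closedBall x (u k)) := measure_mono diff_subset
            _ = ENNReal.ofReal (u k ^ d) * μ (ball 0 1) :=
              Measure.addHaar_closedBall μ x (hu0 k).le
        calc ∫⁻ z in S k, ENNReal.ofReal (dist z x ^ (-β)) ∂μ
            ≤ ∫⁻ _ in S k, ENNReal.ofReal (2 ^ |β| * u k ^ (-β)) ∂μ :=
              setLIntegral_mono' hSm hpt
          _ = ENNReal.ofReal (2 ^ |β| * u k ^ (-β)) * μ (S k) := setLIntegral_const _ _
          _ ≤ ENNReal.ofReal (2 ^ |β| * u k ^ (-β)) *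
              (ENNReal.ofReal (u k ^ d) * μ (ball 0 1)) := mul_le_mul_right hmeas _
          _ = (μ (ball 0 1) * ENNReal.ofReal (2 ^ |β|) * ENNReal.ofReal (r ^ γ))
              * ENNReal.ofReal q ^ k := by
              have e1 : (u k : ℝ) ^ (-β) * u k ^ (d:ℕ) = u k ^ γ := by
                rw [← Real.rpow_natCast (u k) d, ← Real.rpow_add (hu0 k), hγ]
                ring_nf
              have e2 : (u k : ℝ) ^ γ = q ^ k * r ^ γ := by
                rw [hu, Real.mul_rpow (by positivity) hr.le, hq,
                  ← Real.rpow_natCast (1/2:ℝ) k, ← Real.rpow_mul (by norm_num),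
                  mul_comm (k:ℝ) γ, Real.rpow_mul (by norm_num), Real.rpow_natCast]
              have key : ENNReal.ofReal (2 ^ |β| * u k ^ (-β)) * ENNReal.ofReal (u k ^ d) =
                  ENNReal.ofReal (2 ^ |β|) * ENNReal.ofReal (r ^ γ) * ENNReal.ofReal q ^ k := by
                rw [← ENNReal.ofReal_pow hq0.le, ← ENNReal.ofReal_mul (by positivity),
                  ← ENNReal.ofReal_mul (by positivity), ← ENNReal.ofReal_mul (by positivity)]
                congr 1
                rw [mul_assoc, e1, e2]
                ring
              calc ENNReal.ofReal (2 ^ |β| * u k ^ (-β)) *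
                    (ENNReal.ofReal (u k ^ d) * μ (ball 0 1))
                  = (ENNReal.ofReal (2 ^ |β| * u k ^ (-β)) * ENNReal.ofReal (u k ^ d))
                      * μ (ball 0 1) := by ring
                _ = _ := by rw [key]; ring
    _ = (μ (ball 0 1) * ENNReal.ofReal (2 ^ |β|) * ENNReal.ofReal (r ^ γ))
          * (1 - ENNReal.ofReal q)⁻¹ := by
        rw [ENNReal.tsum_mul_left, ENNReal.tsum_geometric]
    _ = C₀ * ENNReal.ofReal (r ^ γ) := by rw [hC₀]; ring
    _ ≤ ENNReal.ofReal ((C₀.toReal + 1) * r ^ γ) := by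
        rw [ENNReal.ofReal_mul (by positivity)]
        refine mul_le_mul_left ?_ _
        conv_lhs => rw [← ENNReal.ofReal_toReal hC₀top]
        exact ENNReal.ofReal_le_ofReal (by linarith)


lemma abs_rpow_sub_rpow_le {ν : ℝ} (hν : 0 < ν) {c a b : ℝ} (hc : 0 < c)
    (ha : c ≤ a) (hb : c ≤ b) :
    |b ^ (-ν) - a ^ (-ν)| ≤ ν * c ^ (-ν - 1) * |b - a| := by
  have key := Convex.norm_image_sub_le_of_norm_hasDerivWithin_le
    (f := fun t : ℝ => t ^ (-ν)) (f' := fun t : ℝ => -ν * t ^ (-ν - 1))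
    (s := Ici c) (C := ν * c ^ (-ν - 1)) ?_ ?_ (convex_Ici c) (mem_Ici.2 ha) (mem_Ici.2 hb)
  · simpa [Real.norm_eq_abs] using key
  · intro t ht
    exact (Real.hasDerivAt_rpow_const (Or.inl (ne_of_gt (lt_of_lt_of_le hc ht)))).hasDerivWithinAt
  · intro t ht
    have ht0 : 0 < t := lt_of_lt_of_le hc ht
    rw [Real.norm_eq_abs, abs_mul, abs_neg, abs_of_pos hν,
      abs_of_pos (Real.rpow_pos_of_pos ht0 _)]
    exact mul_le_mul_of_nonneg_left
      (Real.rpow_le_rpow_of_nonpos hc ht (by linarith)) hν.le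

lemma isOpen_cusp (m : ℕ) {α : ℝ} (hα : 0 < α) : IsOpen (cusp m α) := by
  have h1 : IsOpen {x : EuclideanSpace ℝ (Fin m) × ℝ | 0 < x.2} :=
    isOpen_lt continuous_const continuous_snd
  have h2 : IsOpen {x : EuclideanSpace ℝ (Fin m) × ℝ | x.2 < 1} :=
    isOpen_lt continuous_snd continuous_const
  have h3 : IsOpen {x : EuclideanSpace ℝ (Fin m) × ℝ | ‖x.1‖ < x.2 ^ (1 / α)} :=
    isOpen_lt (continuous_fst.norm) ((Real.continuous_rpow_const (by positivity)).comp
      continuous_snd)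
  have : cusp m α = {x | 0 < x.2} ∩ ({x | x.2 < 1} ∩ {x | ‖x.1‖ < x.2 ^ (1 / α)}) := rfl
  rw [this]
  exact h1.inter (h2.inter h3)

/-- Pointwise bound for the inner weighted fractional integral of `f(x) = xₙ^{−ν}`
on the Hölder-α cusp. -/
theorem stmt19 {n : ℕ} (hn : 2 ≤ n) (α p s b ν : ℝ) (hα0 : 0 < α) (hα1 : α ≤ 1)
    (hp : 1 < p) (hs : s ∈ Set.Ioo (0:ℝ) 1) (hb : -((1 - s) * p) ≤ b)
    (hν : 0 < ν) :
    ∃ C : ℝ, 0 < C ∧ ∀ x ∈ cusp (n - 1) α,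
      (∫⁻ z in {z | dist x z < dC (cusp (n - 1) α) x / 2},
          ENNReal.ofReal (|z.2 ^ (-ν) - x.2 ^ (-ν)| ^ p /
            dist z x ^ ((n : ℝ) + s * p) *
            min (dC (cusp (n - 1) α) x) (dC (cusp (n - 1) α) z) ^ b)) ≤
        ENNReal.ofReal (C * x.2 ^ (-(ν + 1) * p + (b + (1 - s) * p) / α)) := by
  classical
  obtain ⟨hs0, hs1⟩ := hs
  have hp0 : 0 < p := by linarith
  set m := n - 1 with hm
  have hm1 : 1 ≤ m := by omega
  haveI : Nonempty (Fin m) := ⟨⟨0, hm1⟩⟩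
  haveI : (volume : Measure (EuclideanSpace ℝ (Fin m) × ℝ)).IsAddHaarMeasure :=
    Measure.prod.instIsAddHaarMeasure _ _
  have hfin : Module.finrank ℝ (EuclideanSpace ℝ (Fin m) × ℝ) = n := by
    simp only [Module.finrank_prod, finrank_euclideanSpace_fin, Module.finrank_self]
    omega
  set β : ℝ := (n:ℝ) + s * p - p with hβ
  have hβlt : β < Module.finrank ℝ (EuclideanSpace ℝ (Fin m) × ℝ) := by
    rw [hfin, hβ]
    nlinarith
  obtain ⟨C₀, hC₀, hA⟩ := lintegral_ball_rpow_neg volume hβlt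
  set κ : ℝ := (1 - s) * p with hκ
  have hκ0 : 0 < κ := mul_pos (by linarith) hp0
  have hγκ : (Module.finrank ℝ (EuclideanSpace ℝ (Fin m) × ℝ) : ℝ) - β = κ := by
    rw [hfin, hβ, hκ]; ring
  set K : ℝ := ν * 2 ^ (ν + 1) with hK
  have hK0 : 0 < K := mul_pos hν (Real.rpow_pos_of_pos two_pos _)
  have h1α : 1 ≤ 1 / α := by rw [le_div_iff₀ hα0]; linarith
  have h2b : (1:ℝ) ≤ 2 ^ |b| := by
    calc (1:ℝ) = 2 ^ (0:ℝ) := (Real.rpow_zero 2).symm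
      _ ≤ 2 ^ |b| := Real.rpow_le_rpow_of_exponent_le one_le_two (abs_nonneg b)
  refine ⟨C₀ * K ^ p * 2 ^ |b| * (1/2:ℝ) ^ κ, by positivity, fun x hx => ?_⟩
  obtain ⟨hx0, hx1, hx'⟩ := hx
  set t := x.2 with ht
  set Ω := cusp m α with hΩ
  set D := dC Ω x with hD
  have hΩopen : IsOpen Ω := isOpen_cusp m hα0
  have hΩc_ne : Ωᶜ.Nonempty := ⟨(0, 2), fun h => by
    have := h.2.1
    norm_num at this⟩
  have hD0 : 0 < D := by
    rw [hD]
    unfold dC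
    exact (hΩopen.isClosed_compl.notMem_iff_infDist_pos hΩc_ne).1
      (notMem_compl_iff.2 ⟨hx0, hx1, hx'⟩)
  have htα0 : (0:ℝ) < t ^ (1 / α) := Real.rpow_pos_of_pos hx0 _
  -- D ≤ t ^ (1/α)
  have hw : ∃ w : EuclideanSpace ℝ (Fin m), ‖w‖ = t ^ (1 / α) ∧ dist x.1 w ≤ t ^ (1 / α) := by
    by_cases h : x.1 = 0
    · refine ⟨EuclideanSpace.single ⟨0, hm1⟩ (t ^ (1 / α)), ?_, ?_⟩
      · rw [EuclideanSpace.norm_single, Real.norm_eq_abs, abs_of_pos htα0]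
      · rw [dist_eq_norm, h, zero_sub, norm_neg, EuclideanSpace.norm_single,
          Real.norm_eq_abs, abs_of_pos htα0]
    · have hx1n : (0:ℝ) < ‖x.1‖ := norm_pos_iff.2 h
      refine ⟨(t ^ (1 / α) * ‖x.1‖⁻¹) • x.1, ?_, ?_⟩
      · rw [norm_smul, Real.norm_eq_abs, abs_of_pos (by positivity), mul_assoc,
          inv_mul_cancel₀ hx1n.ne', mul_one]
      · have : x.1 - (t ^ (1 / α) * ‖x.1‖⁻¹) • x.1 = (1 - t ^ (1 / α) * ‖x.1‖⁻¹) • x.1 := by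
          rw [sub_smul, one_smul]
        rw [dist_eq_norm, this, norm_smul, Real.norm_eq_abs]
        have hlt : ‖x.1‖ < t ^ (1 / α) := hx'
        have h1 : 1 - t ^ (1 / α) * ‖x.1‖⁻¹ < 0 := by
          rw [sub_neg, ← div_eq_mul_inv, lt_div_iff₀ hx1n]
          linarith
        rw [abs_of_neg h1]
        rw [neg_sub, sub_mul, one_mul, mul_assoc, inv_mul_cancel₀ hx1n.ne', mul_one]
        linarith
  have hDt : D ≤ t ^ (1 / α) := by
    obtain ⟨w, hwn, hwd⟩ := hw
    have hwΩ : (w, t) ∈ Ωᶜ := by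
      intro hmem
      have := hmem.2.2
      rw [hwn] at this
      exact lt_irrefl _ this
    refine le_trans (Metric.infDist_le_dist_of_mem hwΩ) ?_
    rw [Prod.dist_eq]
    have h2 : dist x.2 t = 0 := by rw [ht, dist_self]
    rw [h2, max_eq_left dist_nonneg]
    exact hwd
  have hta : t ^ (1 / α) ≤ t := by
    calc t ^ (1 / α) ≤ t ^ (1:ℝ) :=
      Real.rpow_le_rpow_of_exponent_ge hx0 hx1.le h1α
    _ = t := Real.rpow_one t
  have hDt2 : D ≤ t := hDt.trans hta
  -- rewrite the set
  have hset : {z : EuclideanSpace ℝ (Fin m) × ℝ | dist x z < D / 2} = ball x (D/2) := by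
    ext z
    rw [mem_setOf_eq, mem_ball, dist_comm]
  -- pointwise bound
  set A : ℝ := (K * t ^ (-ν - 1)) ^ p * (2 ^ |b| * D ^ b) with hAdef
  have hA0 : 0 < A := by positivity
  have hpt : ∀ z ∈ ball x (D/2),
      ENNReal.ofReal (|z.2 ^ (-ν) - x.2 ^ (-ν)| ^ p / dist z x ^ ((n:ℝ) + s * p) *
        min D (dC Ω z) ^ b)
      ≤ ENNReal.ofReal A * ENNReal.ofReal (dist z x ^ (-β)) := by
    intro z hz
    rw [← ENNReal.ofReal_mul hA0.le]
    apply ENNReal.ofReal_le_ofReal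
    rcases eq_or_ne z x with rfl | hzx
    · have h0 : |z.2 ^ (-ν) - z.2 ^ (-ν)| = 0 := by simp
      rw [h0, Real.zero_rpow hp0.ne', zero_div, zero_mul]
      positivity
    · have hdz : 0 < dist z x := dist_pos.2 hzx
      have hz2 : |z.2 - t| ≤ dist z x := by
        rw [← Real.dist_eq]
        calc dist z.2 x.2 ≤ max (dist z.1 x.1) (dist z.2 x.2) := le_max_right _ _
          _ = dist z x := (Prod.dist_eq).symm
      have hdist_half : dist z x < D/2 := mem_ball.1 hz
      have hz2half : t/2 ≤ z.2 := by
        have habs := abs_le.1 hz2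
        linarith [habs.1, habs.2]
      have hmvt : |z.2 ^ (-ν) - t ^ (-ν)| ≤ ν * (t/2) ^ (-ν - 1) * |z.2 - t| :=
        abs_rpow_sub_rpow_le hν (by linarith) (by linarith) hz2half
      have hhalf : ((t/2):ℝ) ^ (-ν - 1) = 2 ^ (ν + 1) * t ^ (-ν - 1) := by
        rw [show t/2 = t * (2:ℝ)⁻¹ by ring, Real.mul_rpow hx0.le (by norm_num),
          Real.inv_rpow (by norm_num), ← Real.rpow_neg (by norm_num)]
        rw [show -(-ν - 1) = ν + 1 by ring]
        ring
      have hbase : |z.2 ^ (-ν) - t ^ (-ν)| ≤ K * t ^ (-ν - 1) * dist z x := by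
        calc |z.2 ^ (-ν) - t ^ (-ν)| ≤ ν * (t/2) ^ (-ν - 1) * |z.2 - t| := hmvt
          _ = K * t ^ (-ν - 1) * |z.2 - t| := by rw [hhalf, hK]; ring
          _ ≤ K * t ^ (-ν - 1) * dist z x :=
            mul_le_mul_of_nonneg_left hz2 (by positivity)
      have h1 : |z.2 ^ (-ν) - t ^ (-ν)| ^ p ≤ (K * t ^ (-ν - 1)) ^ p * dist z x ^ p := by
        rw [← Real.mul_rpow (by positivity) hdz.le]
        exact Real.rpow_le_rpow (abs_nonneg _) hbase hp0.le
      -- min bound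
      have hdzΩ : D/2 ≤ dC Ω z := by
        have hlip : Metric.infDist x Ωᶜ ≤ Metric.infDist z Ωᶜ + dist x z :=
          Metric.infDist_le_infDist_add_dist
        have hxz : dist x z < D / 2 := by rw [dist_comm]; exact hdist_half
        have hDeq : D = Metric.infDist x Ωᶜ := hD
        have hzeq : dC Ω z = Metric.infDist z Ωᶜ := rfl
        rw [hzeq]
        rw [hDeq] at hxz ⊢
        linarith
      have hminnn : (0:ℝ) ≤ min D (dC Ω z) := le_min hD0.le Metric.infDist_nonneg
      have h2 : min D (dC Ω z) ^ b ≤ 2 ^ |b| * D ^ b := by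
        rcases le_or_gt 0 b with hb0 | hb0
        · calc min D (dC Ω z) ^ b ≤ D ^ b :=
            Real.rpow_le_rpow hminnn (min_le_left _ _) hb0
          _ ≤ 2 ^ |b| * D ^ b :=
            le_mul_of_one_le_left (Real.rpow_nonneg hD0.le _) h2b
        · have hmin2 : D/2 ≤ min D (dC Ω z) := le_min (by linarith) hdzΩ
          calc min D (dC Ω z) ^ b ≤ (D/2) ^ b :=
            Real.rpow_le_rpow_of_nonpos (half_pos hD0) hmin2 hb0.le
          _ = 2 ^ |b| * D ^ b := by
            rw [show D/2 = D * (2:ℝ)⁻¹ by ring, Real.mul_rpow hD0.le (by norm_num),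
              Real.inv_rpow (by norm_num), ← Real.rpow_neg (by norm_num),
              abs_of_neg hb0]
            ring
      have h3 : dist z x ^ p / dist z x ^ ((n:ℝ) + s*p) = dist z x ^ (-β) := by
        rw [← Real.rpow_sub hdz, hβ]
        congr 1
        ring
      have hdenom : (0:ℝ) < dist z x ^ ((n:ℝ) + s*p) := Real.rpow_pos_of_pos hdz _
      calc |z.2 ^ (-ν) - x.2 ^ (-ν)| ^ p / dist z x ^ ((n:ℝ) + s * p) * min D (dC Ω z) ^ b
          ≤ ((K * t ^ (-ν - 1)) ^ p * dist z x ^ p / dist z x ^ ((n:ℝ) + s*p)) *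
            (2 ^ |b| * D ^ b) := by
            apply mul_le_mul _ h2 (Real.rpow_nonneg hminnn _) (by positivity)
            gcongr
        _ = A * dist z x ^ (-β) := by
            rw [mul_div_assoc, h3, hAdef]
            ring
  rw [hset]
  refine le_trans (setLIntegral_mono' measurableSet_ball hpt) ?_
  rw [lintegral_const_mul' _ _ ofReal_ne_top]
  refine le_trans (mul_le_mul_right (hA x (D/2) (half_pos hD0)) _) ?_
  rw [hγκ, ← ENNReal.ofReal_mul hA0.le]
  apply ENNReal.ofReal_le_ofReal
  have e1 : (K * t ^ (-ν - 1)) ^ p = K ^ p * t ^ ((-ν - 1) * p) := by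
    rw [Real.mul_rpow hK0.le (Real.rpow_nonneg hx0.le _), ← Real.rpow_mul hx0.le]
  have e2 : ((D/2):ℝ) ^ κ = D ^ κ * (1/2:ℝ) ^ κ := by
    rw [show (D/2:ℝ) = D * (1/2) by ring, Real.mul_rpow hD0.le (by norm_num)]
  have hbκ : 0 ≤ b + κ := by rw [hκ]; linarith
  have e4 : D ^ b * D ^ κ ≤ t ^ ((b + κ)/α) := by
    rw [← Real.rpow_add hD0]
    calc D ^ (b + κ) ≤ (t ^ (1/α)) ^ (b + κ) := Real.rpow_le_rpow hD0.le hDt hbκ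
      _ = t ^ ((b+κ)/α) := by
        rw [← Real.rpow_mul hx0.le]
        congr 1
        field_simp
  calc A * (C₀ * (D/2) ^ κ)
      = (C₀ * K ^ p * 2 ^ |b| * (1/2:ℝ) ^ κ) * (t ^ ((-ν-1)*p) * (D ^ b * D ^ κ)) := by
        rw [hAdef, e1, e2]; ring
    _ ≤ (C₀ * K ^ p * 2 ^ |b| * (1/2:ℝ) ^ κ) * (t ^ ((-ν-1)*p) * t ^ ((b+κ)/α)) := by
        apply mul_le_mul_of_nonneg_left
          (mul_le_mul_of_nonneg_left e4 (Real.rpow_nonneg hx0.le _))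
        positivity
    _ = _ := by
        rw [← Real.rpow_add hx0,
          show ((-ν-1)*p + (b+κ)/α) = (-(ν+1)*p + (b+κ)/α) by ring]
end
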